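/- arXiv:2003.08411 — 5 statements merged into one kernel-verified Lean document; each statement's English description precedes it below -/
import Mathlib

section
/- Let H be an n × n Hermitian matrix with all eigenvalues in [c₂, c₁] and let τ > 0 satisfy c₁ ≤ 1/τ and c₂ ≤ 1/τ. Then log n − S(ρ_H^τ) ≤ τ(c₁ − c₂). -/
open Real Finset

/-- Gibbs-state entropy in terms of the eigenvalues `lam`:
`S(ρ_H^τ) = τ·(Σ_i λ_i e^{-τλ_i})/(Σ_i e^{-τλ_i}) + log(Σ_i e^{-τλ_i})`. -/
noncomputable def gibbsEntropy {m : Type*} [Fintype m] (τ : ℝ) (lam : m → ℝ) : ℝ :=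
  τ * (∑ i, lam i * Real.exp (-τ * lam i)) / (∑ i, Real.exp (-τ * lam i)) +
    Real.log (∑ i, Real.exp (-τ * lam i))

/-!
The entropy is the mean energy `τ⟨λ⟩` plus the log-partition function `log Z`. The mean of the
eigenvalues under the Gibbs weights is at least `c₂`, and each of the `n` Boltzmann weights is at
least `e^{-τ c₁}`, so `log Z ≥ log n - τ c₁`. Adding the two bounds gives the claim.
-/

section GibbsEntropy

variable {m : Type*} [Fintype m] [Nonempty m]

theorem le_sum_mul_div_sum_of_forall_le {w lam : m → ℝ} {c : ℝ} (hw : ∀ i, 0 < w i)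
    (hc : ∀ i, c ≤ lam i) : c ≤ (∑ i, lam i * w i) / ∑ i, w i := by
  rw [le_div_iff₀ (sum_pos (fun i _ ↦ hw i) univ_nonempty), mul_sum]
  exact sum_le_sum fun i _ ↦ mul_le_mul_of_nonneg_right (hc i) (hw i).le

theorem log_card_sub_le_log_sum_exp {τ c : ℝ} {lam : m → ℝ} (hτ : 0 ≤ τ)
    (hc : ∀ i, lam i ≤ c) :
    log (Fintype.card m) - τ * c ≤ log (∑ i, exp (-τ * lam i)) := by
  have hsum : (Fintype.card m : ℝ) * exp (-τ * c) ≤ ∑ i, exp (-τ * lam i) := by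
    rw [← nsmul_eq_mul, ← card_univ]
    exact card_nsmul_le_sum _ _ _ fun i _ ↦ exp_le_exp.mpr (by nlinarith [hc i])
  have hcard : (0 : ℝ) < Fintype.card m := by exact_mod_cast Fintype.card_pos
  have hlog := log_le_log (by positivity) hsum
  rw [log_mul hcard.ne' (exp_pos _).ne', log_exp] at hlog
  linarith

theorem log_card_sub_gibbsEntropy_le {τ c₁ c₂ : ℝ} {lam : m → ℝ} (hτ : 0 ≤ τ)
    (hlam : ∀ i, c₂ ≤ lam i ∧ lam i ≤ c₁) :
    log (Fintype.card m) - gibbsEntropy τ lam ≤ τ * (c₁ - c₂) := by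
  have hmean : τ * c₂ ≤ τ * ((∑ i, lam i * exp (-τ * lam i)) / ∑ i, exp (-τ * lam i)) :=
    mul_le_mul_of_nonneg_left
      (le_sum_mul_div_sum_of_forall_le (fun i ↦ exp_pos _) fun i ↦ (hlam i).1) hτ
  have hlog := log_card_sub_le_log_sum_exp hτ fun i ↦ (hlam i).2
  rw [gibbsEntropy, mul_div_assoc]
  linarith

end GibbsEntropy

theorem gibbs_entropy_bound_small_tau_general (n : ℕ) (hn : 0 < n)
    (H : Matrix (Fin n) (Fin n) ℂ) (hH : H.IsHermitian)
    (c₁ c₂ τ : ℝ) (hτ : 0 < τ)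
    (hbound : ∀ i, c₂ ≤ hH.eigenvalues i ∧ hH.eigenvalues i ≤ c₁) :
    Real.log n - gibbsEntropy τ hH.eigenvalues ≤ τ * (c₁ - c₂) := by
  have : Nonempty (Fin n) := ⟨⟨0, hn⟩⟩
  simpa using log_card_sub_gibbsEntropy_le hτ.le hbound

theorem gibbs_entropy_bound_small_tau (n : ℕ) (hn : 0 < n)
    (H : Matrix (Fin n) (Fin n) ℂ) (hH : H.IsHermitian)
    (c₁ c₂ τ : ℝ) (hτ : 0 < τ)
    (hbound : ∀ i, c₂ ≤ hH.eigenvalues i ∧ hH.eigenvalues i ≤ c₁)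
    (h1 : c₁ ≤ 1 / τ) (h2 : c₂ ≤ 1 / τ) :
    Real.log n - gibbsEntropy τ hH.eigenvalues ≤ τ * (c₁ - c₂) :=
  gibbs_entropy_bound_small_tau_general n hn H hH c₁ c₂ τ hτ hbound
end

section
/- Let (H_n) be a sequence of singular positive semidefinite n × n Hermitian matrices, each with exactly one zero eigenvalue, and let τ > 0 be fixed. If the smallest nonzero eigenvalue satisfies λ_{n-1}(H_n)/log n → ∞ as n → ∞, then S(ρ_{H_n}^τ) → 0. -/
/-!
With one zero eigenvalue `λ_{i₀} = 0` the partition function is `Z = 1 + ∑_{i ≠ i₀} e^{-τλ_i} ≥ 1`,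
so with `A = ∑ λ_i e^{-τλ_i} ≥ 0` the bounds `τ A / Z ≤ τ A` and `log Z ≤ Z - 1` give
`0 ≤ S ≤ τ A + Z - 1 = ∑_{i ≠ i₀} (1 + τλ_i) e^{-τλ_i}`. Since `1 + y ≤ 2 e^{y/2}`, every term is
at most `2 e^{-τ λ_min / 2}`, so `S ≤ 2 n e^{-τ λ_min / 2} = 2 exp (log n - τ λ_min / 2)`, which
tends to `0` once `λ_min ≫ log n`.
-/

open Real Finset Filter ComplexOrder

lemma one_add_mul_exp_neg_le (y : ℝ) : (1 + y) * exp (-y) ≤ 2 * exp (-(y / 2)) := by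
  have hsplit : exp (-y) = exp (-(y / 2)) * exp (-(y / 2)) := by rw [← exp_add]; ring_nf
  have hy : 1 + y ≤ 2 * exp (y / 2) := by linarith [add_one_le_exp (y / 2)]
  calc (1 + y) * exp (-y) ≤ 2 * exp (y / 2) * exp (-y) := by gcongr
    _ = 2 * exp (-(y / 2)) := by rw [hsplit, ← mul_assoc, mul_assoc 2, ← exp_add]; simp

section GibbsEntropy

variable {m : Type*} [Fintype m] {τ : ℝ} {lam : m → ℝ} {i₀ : m}

lemma one_le_sum_exp_of_eq_zero (hi₀ : lam i₀ = 0) : 1 ≤ ∑ i, exp (-τ * lam i) :=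
  calc (1 : ℝ) = exp (-τ * lam i₀) := by simp [hi₀]
    _ ≤ ∑ i, exp (-τ * lam i) :=
      single_le_sum (f := fun i => exp (-τ * lam i)) (fun i _ => (exp_pos _).le) (mem_univ i₀)

lemma gibbsEntropy_nonneg (hτ : 0 ≤ τ) (hlam : ∀ i, 0 ≤ lam i) (hi₀ : lam i₀ = 0) :
    0 ≤ gibbsEntropy τ lam := by
  have hZ := one_le_sum_exp_of_eq_zero (τ := τ) hi₀
  have hA : 0 ≤ ∑ i, lam i * exp (-τ * lam i) :=
    sum_nonneg fun i _ => mul_nonneg (hlam i) (exp_pos _).le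
  unfold gibbsEntropy
  have := log_nonneg hZ
  positivity

lemma gibbsEntropy_le_sum_erase [DecidableEq m] (hτ : 0 ≤ τ) (hlam : ∀ i, 0 ≤ lam i)
    (hi₀ : lam i₀ = 0) :
    gibbsEntropy τ lam ≤ ∑ i ∈ univ.erase i₀, (1 + τ * lam i) * exp (-(τ * lam i)) := by
  set Z := ∑ i, exp (-τ * lam i)
  set A := ∑ i, lam i * exp (-τ * lam i)
  have hZ : 1 ≤ Z := one_le_sum_exp_of_eq_zero hi₀
  have hA : 0 ≤ τ * A := mul_nonneg hτ (sum_nonneg fun i _ => mul_nonneg (hlam i) (exp_pos _).le)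
  have hsum : τ * A + (Z - 1) = ∑ i ∈ univ.erase i₀, (1 + τ * lam i) * exp (-(τ * lam i)) := by
    simp only [A, Z, ← add_sum_erase _ _ (mem_univ i₀), hi₀, mul_zero, zero_mul, zero_add, neg_mul,
      exp_zero, add_sub_cancel_left, mul_sum, ← sum_add_distrib]
    exact sum_congr rfl fun i _ => by ring
  calc gibbsEntropy τ lam = τ * A / Z + log Z := rfl
    _ ≤ τ * A + (Z - 1) := add_le_add (div_le_self hA hZ) (log_le_sub_one_of_pos (by linarith))
    _ = _ := hsum

lemma gibbsEntropy_le_of_le (hτ : 0 ≤ τ) (hlam : ∀ i, 0 ≤ lam i) (hi₀ : lam i₀ = 0) {L : ℝ}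
    (hL : ∀ i ≠ i₀, L ≤ lam i) :
    gibbsEntropy τ lam ≤ 2 * (Fintype.card m * exp (-(τ / 2) * L)) := by
  classical
  have hterm : ∀ i ∈ univ.erase i₀, (1 + τ * lam i) * exp (-(τ * lam i)) ≤
      2 * exp (-(τ / 2) * L) := fun i hi =>
    calc (1 + τ * lam i) * exp (-(τ * lam i)) ≤ 2 * exp (-(τ * lam i / 2)) :=
          one_add_mul_exp_neg_le _
      _ ≤ 2 * exp (-(τ / 2) * L) := by
          have := hL i (ne_of_mem_erase hi)
          gcongr 2 * exp ?_
          nlinarith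
  calc gibbsEntropy τ lam ≤ ∑ i ∈ univ.erase i₀, (1 + τ * lam i) * exp (-(τ * lam i)) :=
        gibbsEntropy_le_sum_erase hτ hlam hi₀
    _ ≤ (univ.erase i₀).card * (2 * exp (-(τ / 2) * L)) := by
        simpa using sum_le_card_nsmul _ _ _ hterm
    _ ≤ 2 * (Fintype.card m * exp (-(τ / 2) * L)) := by
        rw [mul_left_comm]
        gcongr
        exact_mod_cast (card_erase_le).trans (card_univ).le

end GibbsEntropy

lemma tendsto_natCast_mul_exp_neg_of_div_log_tendsto_atTop {c : ℝ} (hc : 0 < c) {L : ℕ → ℝ}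
    (hL : Tendsto (fun n : ℕ => L n / log n) atTop atTop) :
    Tendsto (fun n : ℕ => (n : ℝ) * exp (-c * L n)) atTop (nhds 0) := by
  have hlog : Tendsto (fun n : ℕ => log n) atTop atTop :=
    tendsto_log_atTop.comp tendsto_natCast_atTop_atTop
  have hexponent : Tendsto (fun n : ℕ => log n - c * L n) atTop atBot := by
    refine tendsto_atBot_mono' atTop ?_ (tendsto_neg_atBot_iff.mpr hlog)
    filter_upwards [hL.eventually_ge_atTop (2 / c), hlog.eventually_gt_atTop 0] with n hLn hlogn
    have : 2 * log n ≤ L n * c := (div_le_div_iff₀ hc hlogn).mp hLn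
    linarith
  refine (tendsto_exp_atBot.comp hexponent).congr' ?_
  filter_upwards [eventually_gt_atTop 0] with n hn
  rw [Function.comp_apply, exp_sub, exp_log (by exact_mod_cast hn), neg_mul, exp_neg,
    div_eq_mul_inv]

/-- Singular PSD matrices with a single zero eigenvalue whose smallest nonzero
eigenvalue satisfies `λ_{n-1} ≫ log n` have Gibbs entropy `o(1)`. -/
theorem gibbs_entropy_little_o_one (τ : ℝ) (hτ : 0 < τ)
    (H : (n : ℕ) → Matrix (Fin n) (Fin n) ℂ)
    (hpsd : ∀ n, (H n).PosSemidef)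
    (hker : ∀ n, 2 ≤ n → ∃! i, (hpsd n).isHermitian.eigenvalues i = 0)
    (lmin : ℕ → ℝ)
    (hlmin : ∀ n, 2 ≤ n →
      IsLeast {x | x ∈ Set.range (hpsd n).isHermitian.eigenvalues ∧ x ≠ 0} (lmin n))
    (hgg : Tendsto (fun n : ℕ => lmin n / Real.log n) atTop atTop) :
    Tendsto (fun n : ℕ => gibbsEntropy τ (hpsd n).isHermitian.eigenvalues)
      atTop (nhds 0) := by
  have hbound : ∀ n, 2 ≤ n → 0 ≤ gibbsEntropy τ (hpsd n).isHermitian.eigenvalues ∧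
      gibbsEntropy τ (hpsd n).isHermitian.eigenvalues ≤ 2 * (n * exp (-(τ / 2) * lmin n)) := by
    intro n hn
    obtain ⟨i₀, hi₀, hunique⟩ := hker n hn
    have hL : ∀ i ≠ i₀, lmin n ≤ (hpsd n).isHermitian.eigenvalues i :=
      fun i hi => (hlmin n hn).2 ⟨⟨i, rfl⟩, fun h => hi (hunique i h)⟩
    refine ⟨gibbsEntropy_nonneg hτ.le (hpsd n).eigenvalues_nonneg hi₀, ?_⟩
    simpa using gibbsEntropy_le_of_le hτ.le (hpsd n).eigenvalues_nonneg hi₀ hL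
  have hlim := (tendsto_natCast_mul_exp_neg_of_div_log_tendsto_atTop (half_pos hτ) hgg).const_mul 2
  rw [mul_zero] at hlim
  exact tendsto_of_tendsto_of_tendsto_of_le_of_le' tendsto_const_nhds hlim
    (eventually_atTop.2 ⟨2, fun n hn => (hbound n hn).1⟩)
    (eventually_atTop.2 ⟨2, fun n hn => (hbound n hn).2⟩)
end

section
/- Let 𝓛(K_n) be the normalized Laplacian of the complete graph on n vertices, with eigenvalues 0 (multiplicity 1) and n/(n−1) (multiplicity n−1), and fix τ > 0. Then log n − S(ρ_{𝓛(K_n)}^τ) → 0 as n → ∞, where S(ρ_{𝓛(K_n)}^τ) = τ·(n·e^{−τn/(n−1)})/(1 + (n−1)e^{−τn/(n−1)}) + log(1 + (n−1)e^{−τn/(n−1)}). -/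
open Real Filter Topology

/-! With `a n = exp (-τ n / (n - 1))` and partition function `Z n = 1 + (n - 1) a n`, one has
`log n - S = -log (Z n / n) - τ a n / (Z n / n)`. Both `a n` and `Z n / n` tend to `exp (-τ)`,
so the right-hand side tends to `τ - τ = 0`. -/

lemma tendsto_exp_mul_natCast_div_natCast_sub_one (c : ℝ) :
    Tendsto (fun n : ℕ => exp (c * n / ((n : ℝ) - 1))) atTop (𝓝 (exp c)) := by
  have hratio : Tendsto (fun n : ℕ => (n : ℝ) / ((n : ℝ) - 1)) atTop (𝓝 1) := by
    simpa only [sub_eq_add_neg] using tendsto_natCast_div_add_atTop (-1 : ℝ)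
  simpa only [mul_div_assoc, mul_one, Function.comp_def] using
    (continuous_exp.tendsto _).comp (hratio.const_mul c)

lemma tendsto_one_add_natCast_sub_one_mul_div_natCast {a : ℕ → ℝ} {L : ℝ}
    (ha : Tendsto a atTop (𝓝 L)) :
    Tendsto (fun n : ℕ => (1 + ((n : ℝ) - 1) * a n) / n) atTop (𝓝 L) := by
  have hinv : Tendsto (fun n : ℕ => (n : ℝ)⁻¹) atTop (𝓝 0) :=
    tendsto_inv_atTop_zero.comp tendsto_natCast_atTop_atTop
  have hlim := hinv.add (((tendsto_const_nhds (x := (1 : ℝ))).sub hinv).mul ha)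
  rw [zero_add, sub_zero, one_mul] at hlim
  refine hlim.congr' ?_
  filter_upwards [eventually_ne_atTop 0] with n hn
  field_simp

lemma log_sub_entropy_eq {N Z x τ : ℝ} (hN : 0 < N) (hZ : 0 < Z) :
    log N - (τ * (N * x) / Z + log Z) = -log (Z / N) - τ * (x / (Z / N)) := by
  rw [log_div hZ.ne' hN.ne']
  field_simp
  ring

theorem complete_graph_normalized_laplacian_entropy_general (τ : ℝ) :
    Tendsto (fun n : ℕ =>
        Real.log n -
          (τ * ((n : ℝ) * Real.exp (-τ * (n : ℝ) / ((n : ℝ) - 1))) /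
              (1 + ((n : ℝ) - 1) * Real.exp (-τ * (n : ℝ) / ((n : ℝ) - 1))) +
            Real.log (1 + ((n : ℝ) - 1) * Real.exp (-τ * (n : ℝ) / ((n : ℝ) - 1)))))
      atTop (nhds 0) := by
  set a : ℕ → ℝ := fun n => exp (-τ * n / ((n : ℝ) - 1))
  set Z : ℕ → ℝ := fun n => 1 + ((n : ℝ) - 1) * a n
  have ha : Tendsto a atTop (𝓝 (exp (-τ))) := tendsto_exp_mul_natCast_div_natCast_sub_one (-τ)
  have hZ : Tendsto (fun n => Z n / n) atTop (𝓝 (exp (-τ))) :=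
    tendsto_one_add_natCast_sub_one_mul_div_natCast ha
  have hlim : Tendsto (fun n => -log (Z n / n) - τ * (a n / (Z n / n))) atTop (𝓝 0) := by
    have hne : exp (-τ) ≠ 0 := (exp_pos _).ne'
    simpa [log_exp, div_self hne] using
      ((continuousAt_log hne).tendsto.comp hZ).neg.sub ((ha.div hZ hne).const_mul τ)
  refine hlim.congr' ?_
  filter_upwards [eventually_ge_atTop 1] with n hn
  have hZ_pos : 0 < Z n := add_pos_of_pos_of_nonneg one_pos <|
    mul_nonneg (sub_nonneg.2 (by exact_mod_cast hn)) (exp_pos _).le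
  exact (log_sub_entropy_eq (by positivity) hZ_pos).symm

/-- For the normalized Laplacian of the complete graph `K_n` (eigenvalues `0`
once and `n/(n−1)` with multiplicity `n−1`), `log n − S(ρ^τ) → 0`. -/
theorem complete_graph_normalized_laplacian_entropy (τ : ℝ) (hτ : 0 < τ) :
    Tendsto (fun n : ℕ =>
        Real.log n -
          (τ * ((n : ℝ) * Real.exp (-τ * (n : ℝ) / ((n : ℝ) - 1))) /
              (1 + ((n : ℝ) - 1) * Real.exp (-τ * (n : ℝ) / ((n : ℝ) - 1))) +
            Real.log (1 + ((n : ℝ) - 1) * Real.exp (-τ * (n : ℝ) / ((n : ℝ) - 1)))))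
      atTop (nhds 0) :=
  complete_graph_normalized_laplacian_entropy_general τ
end

section
/- Let L(K_{m,1}) be the Laplacian of the star graph on m+1 vertices, with eigenvalues 0 (multiplicity 1), 1 (multiplicity m−1), and m+1 (multiplicity 1), and fix τ > 0. Then log(m+1) − S(ρ_{L(K_{m,1})}^τ) → 0 as m → ∞. -/
/-!
With `a = e^{-τ}`, the partition function `Z m = 1 + (m - 1) a + e^{-τ(m+1)}` and the energy sum
`E m = (m - 1) a + (m + 1) e^{-τ(m+1)}` both grow like `a m`, because the weight of the top
eigenvalue `m + 1` decays exponentially. Hence `(m + 1) / Z m → e^τ` and `E m / Z m → 1`, so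
`log (m + 1) - S = log ((m + 1) / Z m) - τ E m / Z m → τ - τ = 0`.
-/

open Real Filter Topology

theorem tendsto_add_mul_div_add_mul_of_tendsto {𝕜 : Type*} [Field 𝕜] [CharZero 𝕜]
    [TopologicalSpace 𝕜] [ContinuousSMul ℚ≥0 𝕜] [IsTopologicalSemiring 𝕜] [ContinuousInv₀ 𝕜]
    {u v c d : ℕ → 𝕜} {u₀ v₀ c₀ d₀ : 𝕜} (hu : Tendsto u atTop (𝓝 u₀))
    (hv : Tendsto v atTop (𝓝 v₀)) (hc : Tendsto c atTop (𝓝 c₀)) (hd : Tendsto d atTop (𝓝 d₀))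
    (hd₀ : d₀ ≠ 0) :
    Tendsto (fun k : ℕ ↦ (u k + c k * k) / (v k + d k * k)) atTop (𝓝 (c₀ / d₀)) := by
  have hinv := tendsto_inv_atTop_nhds_zero_nat (𝕜 := 𝕜)
  have hlim : Tendsto (fun k : ℕ ↦ (u k * (k : 𝕜)⁻¹ + c k) / (v k * (k : 𝕜)⁻¹ + d k)) atTop
      (𝓝 ((u₀ * 0 + c₀) / (v₀ * 0 + d₀))) :=
    ((hu.mul hinv).add hc).div ((hv.mul hinv).add hd) (by simpa using hd₀)
  simp only [mul_zero, zero_add] at hlim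
  refine hlim.congr' ?_
  filter_upwards [eventually_ne_atTop 0] with k hk
  have hk' : (k : 𝕜) ≠ 0 := Nat.cast_ne_zero.mpr hk
  field_simp

theorem tendsto_exp_neg_mul_natCast_add_one {τ : ℝ} (hτ : 0 < τ) :
    Tendsto (fun m : ℕ ↦ exp (-τ * ((m : ℝ) + 1))) atTop (𝓝 0) := by
  have hlin : Tendsto (fun m : ℕ ↦ τ * ((m : ℝ) + 1)) atTop atTop :=
    (tendsto_atTop_add_const_right _ _ tendsto_natCast_atTop_atTop).const_mul_atTop hτ
  simpa only [neg_mul, Function.comp_def] using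
    tendsto_exp_atBot.comp (tendsto_neg_atTop_atBot.comp hlin)

/-- For the Laplacian of the star graph `K_{m,1}` on `m+1` vertices
(eigenvalues `0` once, `1` with multiplicity `m−1`, and `m+1` once),
`log(m+1) − S(ρ^τ) → 0` as `m → ∞`. -/
theorem star_graph_laplacian_entropy (τ : ℝ) (hτ : 0 < τ) :
    Tendsto (fun m : ℕ =>
        Real.log ((m : ℝ) + 1) -
          (τ * (((m : ℝ) - 1) * 1 * Real.exp (-τ * 1) +
                ((m : ℝ) + 1) * Real.exp (-τ * ((m : ℝ) + 1))) /
              (1 + ((m : ℝ) - 1) * Real.exp (-τ * 1) +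
                Real.exp (-τ * ((m : ℝ) + 1))) +
            Real.log (1 + ((m : ℝ) - 1) * Real.exp (-τ * 1) +
              Real.exp (-τ * ((m : ℝ) + 1)))))
      atTop (nhds 0) := by
  set a := exp (-τ * 1)
  set ε : ℕ → ℝ := fun m ↦ exp (-τ * ((m : ℝ) + 1))
  set Z : ℕ → ℝ := fun m ↦ 1 + ((m : ℝ) - 1) * a + ε m
  set E : ℕ → ℝ := fun m ↦ ((m : ℝ) - 1) * 1 * a + ((m : ℝ) + 1) * ε m
  have hε : Tendsto ε atTop (𝓝 0) := tendsto_exp_neg_mul_natCast_add_one hτ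
  have ha : a ≠ 0 := (exp_pos _).ne'
  have hZ : Tendsto (fun m : ℕ ↦ ((m : ℝ) + 1) / Z m) atTop (𝓝 (1 / a)) :=
    (tendsto_add_mul_div_add_mul_of_tendsto (u := fun _ ↦ 1) (c := fun _ ↦ 1)
      (v := fun m ↦ 1 - a + ε m) (d := fun _ ↦ a) tendsto_const_nhds
      (tendsto_const_nhds.add hε) tendsto_const_nhds tendsto_const_nhds ha).congr
      fun m ↦ by ring
  have hE : Tendsto (fun m : ℕ ↦ E m / Z m) atTop (𝓝 1) := by
    have h := tendsto_add_mul_div_add_mul_of_tendsto (u := fun m ↦ ε m - a)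
      (c := fun m ↦ a + ε m) (v := fun m ↦ 1 - a + ε m) (d := fun _ ↦ a)
      (hε.sub tendsto_const_nhds) (tendsto_const_nhds.add hε) (tendsto_const_nhds.add hε)
      tendsto_const_nhds ha
    rw [add_zero, div_self ha] at h
    exact h.congr fun m ↦ by ring
  have hlim := (hZ.log (by positivity)).sub (hE.const_mul τ)
  rw [one_div, log_inv, log_exp, neg_mul, neg_neg, mul_one, sub_self] at hlim
  refine hlim.congr' ?_
  filter_upwards [eventually_ge_atTop 1] with m hm
  have hZpos : 0 < Z m := by
    have := mul_nonneg (sub_nonneg.mpr (Nat.one_le_cast.mpr hm)) (exp_pos (-τ * 1)).le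
    have := exp_pos (-τ * ((m : ℝ) + 1))
    simp only [Z, ε]
    linarith
  rw [log_div (by positivity) hZpos.ne']
  ring
end

section
/- Fix τ > 0 and for each n ≥ 1 consider the eigenvalues λ_j = 2cos(2πj/n), j = 0, …, n−1, of the adjacency matrix of the cycle C_n. Then as n → ∞, (1/n)·Σ_{j=0}^{n−1} exp(−2τ·cos(2πj/n)) → ∫₀¹ exp(−2τ·cos(2πx)) dx = I₀(2τ), and (1/n)·Σ_{j=0}^{n−1} cos(2πj/n)·exp(−2τ·cos(2πj/n)) → −I₁(2τ), where I₀, I₁ are modified Bessel functions of the first kind. Consequently S(ρ_{−A(C_n)}^τ) − log n → −2τ·I₁(2τ)/I₀(2τ) + log I₀(2τ). -/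
open Real Filter Finset

/-- Modified Bessel function of the first kind `I₀`, via
`I₀(z) = ∫₀¹ e^{−z·cos(2πx)} dx`. -/
noncomputable def besselI0 (z : ℝ) : ℝ :=
  ∫ x in (0:ℝ)..1, Real.exp (-z * Real.cos (2 * Real.pi * x))

/-- Modified Bessel function of the first kind `I₁`, via
`I₁(z) = −∫₀¹ cos(2πx)·e^{−z·cos(2πx)} dx`. -/
noncomputable def besselI1 (z : ℝ) : ℝ :=
  -∫ x in (0:ℝ)..1, Real.cos (2 * Real.pi * x) * Real.exp (-z * Real.cos (2 * Real.pi * x))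

/-!
Both averages are left Riemann sums of continuous functions on `[0, 1]`, whose defining
integrals are `I₀(2τ)` and `-I₁(2τ)`. On a grid of mesh `1/n`, uniform continuity bounds the
error of each cell by `ε/n`. The entropy is `2τ · (B/n) / (A/n) + log (A/n) + log n` with `A`, `B`
the two sums, so the limit follows from continuity of division and of `log` at `I₀(2τ) > 0`.
-/

open MeasureTheory

theorem abs_intervalIntegral_sub_mul_le {f : ℝ → ℝ} {a b C : ℝ} (hab : a ≤ b)
    (hf : IntervalIntegrable f volume a b) (hC : ∀ x ∈ Set.Ioc a b, |f x - f a| ≤ C) :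
    |(∫ x in a..b, f x) - (b - a) * f a| ≤ C * (b - a) := by
  have hsub : (∫ x in a..b, f x) - (b - a) * f a = ∫ x in a..b, (f x - f a) := by
    rw [intervalIntegral.integral_sub hf (intervalIntegrable_const (c := f a)),
      intervalIntegral.integral_const, smul_eq_mul]
  rw [hsub, ← abs_of_nonneg (sub_nonneg.2 hab)]
  exact intervalIntegral.norm_integral_le_of_norm_le_const (f := fun x => f x - f a) fun x hx =>
    hC x (by rwa [Set.uIoc_of_le hab] at hx)

theorem abs_integral_sub_riemannSum_le {f : ℝ → ℝ} (hf : ContinuousOn f (Set.Icc 0 1))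
    {n : ℕ} (hn : n ≠ 0) {C : ℝ}
    (hC : ∀ x ∈ Set.Icc (0:ℝ) 1, ∀ y ∈ Set.Icc (0:ℝ) 1, |x - y| ≤ 1 / n → |f x - f y| ≤ C) :
    |(∫ x in (0:ℝ)..1, f x) - 1 / n * ∑ j ∈ range n, f (j / n)| ≤ C := by
  have hn' : (0:ℝ) < n := by positivity
  set t : ℕ → ℝ := fun j => j / n with ht_def
  have hstep : ∀ j, t (j + 1) - t j = 1 / n := fun j => by
    simp only [ht_def]; push_cast; ring
  have hmono : ∀ j, t j ≤ t (j + 1) := fun j => by linarith [hstep j, one_div_pos.2 hn']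
  have hmem : ∀ j ≤ n, t j ∈ Set.Icc (0:ℝ) 1 := fun j hj =>
    ⟨by positivity, (div_le_one hn').2 (by exact_mod_cast hj)⟩
  have hcell : ∀ j < n, Set.Icc (t j) (t (j + 1)) ⊆ Set.Icc 0 1 := fun j hj =>
    Set.Icc_subset_Icc (hmem j hj.le).1 (hmem (j + 1) hj).2
  have hint : ∀ j < n, IntervalIntegrable f volume (t j) (t (j + 1)) := fun j hj =>
    (hf.mono (hcell j hj)).intervalIntegrable_of_Icc (hmono j)
  have hsplit : ∫ x in (0:ℝ)..1, f x = ∑ j ∈ range n, ∫ x in t j..t (j + 1), f x := by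
    rw [intervalIntegral.sum_integral_adjacent_intervals hint]
    simp [ht_def, hn]
  calc |(∫ x in (0:ℝ)..1, f x) - 1 / n * ∑ j ∈ range n, f (j / n)|
      = |∑ j ∈ range n, ((∫ x in t j..t (j + 1), f x) - (t (j + 1) - t j) * f (t j))| := by
        simp only [hsplit, mul_sum, ← sum_sub_distrib, hstep]
        rfl
    _ ≤ ∑ j ∈ range n, |(∫ x in t j..t (j + 1), f x) - (t (j + 1) - t j) * f (t j)| :=
        abs_sum_le_sum_abs _ _
    _ ≤ ∑ j ∈ range n, C * (t (j + 1) - t j) := by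
        refine sum_le_sum fun j hj => abs_intervalIntegral_sub_mul_le (hmono j)
          (hint j (mem_range.1 hj)) fun x hx => ?_
        have hx' : x ∈ Set.Icc (t j) (t (j + 1)) := Set.Ioc_subset_Icc_self hx
        refine hC x (hcell j (mem_range.1 hj) hx') (t j) (hmem j (mem_range.1 hj).le) ?_
        rw [abs_of_nonneg (by linarith [hx'.1])]
        linarith [hx'.2, hstep j]
    _ = C := by
        simp only [hstep, sum_const, card_range, nsmul_eq_mul]
        field_simp

theorem tendsto_riemannSum {f : ℝ → ℝ} (hf : ContinuousOn f (Set.Icc 0 1)) :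
    Tendsto (fun n : ℕ => 1 / (n : ℝ) * ∑ j ∈ range n, f (j / n)) atTop
      (nhds (∫ x in (0:ℝ)..1, f x)) := by
  rw [Metric.tendsto_atTop]
  intro ε hε
  obtain ⟨δ, hδ, hfδ⟩ := Metric.uniformContinuousOn_iff.1
    (isCompact_Icc.uniformContinuousOn_of_continuous hf) (ε / 2) (half_pos hε)
  obtain ⟨N, hN⟩ := exists_nat_gt (1 / δ)
  refine ⟨N + 1, fun n hn => ?_⟩
  have hn0 : n ≠ 0 := by omega
  have hn' : (0:ℝ) < n := by positivity
  have hmesh : 1 / (n:ℝ) < δ :=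
    (one_div_lt hn' hδ).2 (hN.trans (by exact_mod_cast Nat.lt_of_succ_le hn))
  rw [dist_comm, Real.dist_eq]
  refine (abs_integral_sub_riemannSum_le hf hn0 fun x hx y hy hxy => ?_).trans_lt
    (half_lt_self hε)
  exact (hfδ x hx y hy (by rw [Real.dist_eq]; linarith)).le

theorem tendsto_mul_div_add_log_sub_log {A B : ℕ → ℝ} {a b : ℝ} (c : ℝ) (ha : a ≠ 0)
    (hA : Tendsto (fun n : ℕ => 1 / (n : ℝ) * A n) atTop (nhds a))
    (hB : Tendsto (fun n : ℕ => 1 / (n : ℝ) * B n) atTop (nhds b)) :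
    Tendsto (fun n : ℕ => c * B n / A n + Real.log (A n) - Real.log n) atTop
      (nhds (c * b / a + Real.log a)) := by
  have hlim := ((hB.const_mul c).div hA ha).add ((Real.continuousAt_log ha).tendsto.comp hA)
  refine hlim.congr' ?_
  filter_upwards [hA.eventually_ne ha, eventually_ne_atTop 0] with n hAn hn
  have hn' : (n:ℝ) ≠ 0 := by exact_mod_cast hn
  have hA0 : A n ≠ 0 := by rintro h; simp [h] at hAn
  simp only [Pi.div_apply, Function.comp_apply, one_div_mul_eq_div, Real.log_div hA0 hn']
  field_simp
  ring

theorem besselI0_pos (z : ℝ) : 0 < besselI0 z :=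
  intervalIntegral.intervalIntegral_pos_of_pos_on
    ((by fun_prop : Continuous fun x : ℝ => Real.exp (-z * Real.cos (2 * π * x))).intervalIntegrable
      0 1)
    (fun _ _ => Real.exp_pos _) zero_lt_one

theorem cycle_graph_entropy_general (τ : ℝ) :
    Tendsto (fun n : ℕ => (1 / (n : ℝ)) *
        ∑ j ∈ Finset.range n, Real.exp (-2 * τ * Real.cos (2 * Real.pi * j / n)))
      atTop (nhds (besselI0 (2 * τ))) ∧
    Tendsto (fun n : ℕ => (1 / (n : ℝ)) *
        ∑ j ∈ Finset.range n, Real.cos (2 * Real.pi * j / n) *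
          Real.exp (-2 * τ * Real.cos (2 * Real.pi * j / n)))
      atTop (nhds (-besselI1 (2 * τ))) ∧
    Tendsto (fun n : ℕ =>
        (2 * τ * (∑ j ∈ Finset.range n, Real.cos (2 * Real.pi * j / n) *
              Real.exp (-2 * τ * Real.cos (2 * Real.pi * j / n))) /
            (∑ j ∈ Finset.range n, Real.exp (-2 * τ * Real.cos (2 * Real.pi * j / n))) +
          Real.log (∑ j ∈ Finset.range n,
            Real.exp (-2 * τ * Real.cos (2 * Real.pi * j / n)))) - Real.log n)
      atTop
      (nhds (-(2 * τ) * besselI1 (2 * τ) / besselI0 (2 * τ) +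
        Real.log (besselI0 (2 * τ)))) := by
  have hI0 : Tendsto (fun n : ℕ => (1 / (n : ℝ)) *
      ∑ j ∈ range n, Real.exp (-2 * τ * Real.cos (2 * π * j / n)))
      atTop (nhds (besselI0 (2 * τ))) := by
    simpa only [besselI0, neg_mul, mul_div_assoc] using
      tendsto_riemannSum (f := fun x => Real.exp (-2 * τ * Real.cos (2 * π * x)))
        (by fun_prop)
  have hI1 : Tendsto (fun n : ℕ => (1 / (n : ℝ)) *
      ∑ j ∈ range n, Real.cos (2 * π * j / n) * Real.exp (-2 * τ * Real.cos (2 * π * j / n)))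
      atTop (nhds (-besselI1 (2 * τ))) := by
    simpa only [besselI1, neg_neg, neg_mul, mul_div_assoc] using
      tendsto_riemannSum
        (f := fun x => Real.cos (2 * π * x) * Real.exp (-2 * τ * Real.cos (2 * π * x)))
        (by fun_prop)
  refine ⟨hI0, hI1, ?_⟩
  convert tendsto_mul_div_add_log_sub_log (2 * τ) (besselI0_pos _).ne' hI0 hI1 using 3
  ring

/-- For the cycle `C_n`, whose adjacency matrix has eigenvalues
`2cos(2πj/n)`, the Riemann sums of the Gibbs weights converge to the Bessel
integrals, and consequently
`S(ρ_{−A(C_n)}^τ) − log n → −2τ·I₁(2τ)/I₀(2τ) + log I₀(2τ)`. -/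
theorem cycle_graph_entropy (τ : ℝ) (hτ : 0 < τ) :
    Tendsto (fun n : ℕ => (1 / (n : ℝ)) *
        ∑ j ∈ Finset.range n, Real.exp (-2 * τ * Real.cos (2 * Real.pi * j / n)))
      atTop (nhds (besselI0 (2 * τ))) ∧
    Tendsto (fun n : ℕ => (1 / (n : ℝ)) *
        ∑ j ∈ Finset.range n, Real.cos (2 * Real.pi * j / n) *
          Real.exp (-2 * τ * Real.cos (2 * Real.pi * j / n)))
      atTop (nhds (-besselI1 (2 * τ))) ∧
    Tendsto (fun n : ℕ =>
        (2 * τ * (∑ j ∈ Finset.range n, Real.cos (2 * Real.pi * j / n) *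
              Real.exp (-2 * τ * Real.cos (2 * Real.pi * j / n))) /
            (∑ j ∈ Finset.range n, Real.exp (-2 * τ * Real.cos (2 * Real.pi * j / n))) +
          Real.log (∑ j ∈ Finset.range n,
            Real.exp (-2 * τ * Real.cos (2 * Real.pi * j / n)))) - Real.log n)
      atTop
      (nhds (-(2 * τ) * besselI1 (2 * τ) / besselI0 (2 * τ) +
        Real.log (besselI0 (2 * τ)))) :=
  cycle_graph_entropy_general τ
end
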